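/- arXiv:1109.1149 — 8 statements merged into one kernel-verified Lean document; each statement's English description precedes it below -/
import Mathlib

section
/- If (x¹, x²) and (y¹, y²) are strong autarkies for f, then their join (x¹ ∨ y¹, x² ∧ y²) is a strong autarky for f, and in particular x¹ ∨ y¹ ≤ x² ∧ y² componentwise. -/
/-!
Write `A x = (x ⊔ x1) ⊓ x2` and `B x = (x ⊔ y1) ⊓ y2`. Each of them strictly decreases `f` at every
point it moves, so a global minimiser `z` of `f` on the finite lattice of labelings is fixed by
both; this gives `x1 ⊔ y1 ≤ z ≤ x2 ⊓ y2`. Once `y1 ≤ x2`, distributivity turns `B ∘ A` into the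
clamp by `(x1 ⊔ y1, x2 ⊓ y2)`, and a composite of two maps that strictly decrease `f` wherever
they move a point has the same property.
-/

def StrictDescent {α β : Type*} [Preorder β] (f : α → β) (g : α → α) : Prop :=
  ∀ x, g x ≠ x → f (g x) < f x

namespace StrictDescent

variable {α β : Type*} {f : α → β} {g h : α → α}

theorem apply_le [Preorder β] (hg : StrictDescent f g) (x : α) : f (g x) ≤ f x := by
  by_cases hx : g x = x
  · rw [hx]
  · exact (hg x hx).le

theorem comp [Preorder β] (hh : StrictDescent f h) (hg : StrictDescent f g) :
    StrictDescent f (h ∘ g) := by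
  intro x hne
  by_cases hx : g x = x
  · simp only [Function.comp_apply, hx] at hne ⊢
    exact hh x hne
  · exact (hh.apply_le (g x)).trans_lt (hg x hx)

theorem apply_eq_self_of_isMin [Preorder β] {z : α} (hg : StrictDescent f g)
    (hz : ∀ x, f z ≤ f x) : g z = z := by
  by_contra hne
  exact (hg z hne).not_ge (hz (g z))

theorem exists_common_fixed [Finite α] [Nonempty α] [LinearOrder β]
    (hg : StrictDescent f g) (hh : StrictDescent f h) : ∃ z, g z = z ∧ h z = z := by
  obtain ⟨z, hz⟩ := Finite.exists_min f
  exact ⟨z, hg.apply_eq_self_of_isMin hz, hh.apply_eq_self_of_isMin hz⟩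

end StrictDescent

section Clamp

variable {α : Type*}

theorem le_and_le_of_sup_inf_eq_self [Lattice α] {a b z : α} (hab : a ≤ b) (hz : (z ⊔ a) ⊓ b = z) :
    a ≤ z ∧ z ≤ b :=
  ⟨hz ▸ le_inf le_sup_right hab, hz ▸ inf_le_right⟩

theorem sup_inf_sup_inf_of_le [DistribLattice α] {a b c d : α} (hcb : c ≤ b) (x : α) :
    ((x ⊔ a) ⊓ b ⊔ c) ⊓ d = (x ⊔ (a ⊔ c)) ⊓ (b ⊓ d) := by
  rw [sup_inf_right, sup_of_le_left hcb, sup_assoc, inf_assoc]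

end Clamp

theorem join_strong_autarkies_general
    {V : Type*} [Fintype V] (L : ℕ) (f : (V → Fin (L + 1)) → ℝ)
    (x1 x2 y1 y2 : V → Fin (L + 1))
    (hx : x1 ≤ x2) (hy : y1 ≤ y2)
    (hxs : ∀ x, (x ⊔ x1) ⊓ x2 ≠ x → f ((x ⊔ x1) ⊓ x2) < f x)
    (hys : ∀ x, (x ⊔ y1) ⊓ y2 ≠ x → f ((x ⊔ y1) ⊓ y2) < f x) :
    x1 ⊔ y1 ≤ x2 ⊓ y2 ∧
    (∀ x, f ((x ⊔ (x1 ⊔ y1)) ⊓ (x2 ⊓ y2)) ≤ f x) ∧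
    (∀ x, (x ⊔ (x1 ⊔ y1)) ⊓ (x2 ⊓ y2) ≠ x → f ((x ⊔ (x1 ⊔ y1)) ⊓ (x2 ⊓ y2)) < f x) := by
  have hA : StrictDescent f fun x => (x ⊔ x1) ⊓ x2 := hxs
  have hB : StrictDescent f fun x => (x ⊔ y1) ⊓ y2 := hys
  obtain ⟨z, hAz, hBz⟩ := hA.exists_common_fixed hB
  obtain ⟨hx1z, hzx2⟩ := le_and_le_of_sup_inf_eq_self hx hAz
  obtain ⟨hy1z, hzy2⟩ := le_and_le_of_sup_inf_eq_self hy hBz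
  have hjoin : StrictDescent f fun x => (x ⊔ (x1 ⊔ y1)) ⊓ (x2 ⊓ y2) := by
    simpa only [Function.comp_def, sup_inf_sup_inf_of_le (hy1z.trans hzx2)] using hB.comp hA
  exact ⟨sup_le (le_inf hx (hx1z.trans hzy2)) (le_inf (hy1z.trans hzx2) hy),
    hjoin.apply_le, hjoin⟩

/-- The join `(x¹ ⊔ y¹, x² ⊓ y²)` of two strong autarkies `(x¹, x²)`,
`(y¹, y²)` for `f` is again a strong autarky for `f`; in particular
`x¹ ⊔ y¹ ≤ x² ⊓ y²` componentwise. -/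
theorem join_strong_autarkies
    {V : Type*} [Fintype V] (L : ℕ) (f : (V → Fin (L + 1)) → ℝ)
    (x1 x2 y1 y2 : V → Fin (L + 1))
    (hx : x1 ≤ x2) (hy : y1 ≤ y2)
    (hxw : ∀ x, f ((x ⊔ x1) ⊓ x2) ≤ f x)
    (hxs : ∀ x, (x ⊔ x1) ⊓ x2 ≠ x → f ((x ⊔ x1) ⊓ x2) < f x)
    (hyw : ∀ x, f ((x ⊔ y1) ⊓ y2) ≤ f x)
    (hys : ∀ x, (x ⊔ y1) ⊓ y2 ≠ x → f ((x ⊔ y1) ⊓ y2) < f x) :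
    x1 ⊔ y1 ≤ x2 ⊓ y2 ∧
    (∀ x, f ((x ⊔ (x1 ⊔ y1)) ⊓ (x2 ⊓ y2)) ≤ f x) ∧
    (∀ x, (x ⊔ (x1 ⊔ y1)) ⊓ (x2 ⊓ y2) ≠ x → f ((x ⊔ (x1 ⊔ y1)) ⊓ (x2 ⊓ y2)) < f x) :=
  join_strong_autarkies_general L f x1 x2 y1 y2 hx hy hxs hys
end

section
/- If f is submodular, then the pair (x^min, x^max), where x^min is the componentwise meet of all minimizers and x^max is the componentwise join of all minimizers, is a strong autarky for f. -/
/-- For a submodular `f`, the pair `(xmin, xmax)` formed by the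
componentwise meet and join of all minimizers is a strong autarky for `f`. -/
theorem submodular_extreme_minimizers_strong_autarky
    {V : Type*} [Fintype V] (L : ℕ) (f : (V → Fin (L + 1)) → ℝ)
    (hsub : ∀ x y : V → Fin (L + 1), f (x ⊔ y) + f (x ⊓ y) ≤ f x + f y)
    (xmin xmax : V → Fin (L + 1))
    (hxmin : ∀ s, IsGLB {i : Fin (L + 1) | ∃ x, (∀ y, f x ≤ f y) ∧ x s = i} (xmin s))
    (hxmax : ∀ s, IsLUB {i : Fin (L + 1) | ∃ x, (∀ y, f x ≤ f y) ∧ x s = i} (xmax s)) :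
    xmin ≤ xmax ∧
    (∀ x, f ((x ⊔ xmin) ⊓ xmax) ≤ f x) ∧
    (∀ x, (x ⊔ xmin) ⊓ xmax ≠ x → f ((x ⊔ xmin) ⊓ xmax) < f x) := by
  classical
  -- The set of minimizers as a Finset
  set M : Finset (V → Fin (L + 1)) :=
    Finset.univ.filter (fun x => ∀ z, f x ≤ f z) with hM
  have hMmem : ∀ x, x ∈ M ↔ ∀ z, f x ≤ f z := by
    intro x; simp [hM]
  -- a minimizer exists
  obtain ⟨m0, -, hm0⟩ := Finset.exists_min_image (Finset.univ : Finset (V → Fin (L + 1))) f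
    ⟨fun _ => 0, Finset.mem_univ _⟩
  have hm0' : ∀ z, f m0 ≤ f z := fun z => hm0 z (Finset.mem_univ z)
  have hMne : M.Nonempty := ⟨m0, (hMmem m0).2 hm0'⟩
  -- minimizers are closed under ⊓ and ⊔
  have hclosed : ∀ x y : V → Fin (L + 1), (∀ z, f x ≤ f z) → (∀ z, f y ≤ f z) →
      (∀ z, f (x ⊓ y) ≤ f z) ∧ (∀ z, f (x ⊔ y) ≤ f z) := by
    intro x y hx hy
    have h := hsub x y
    have h1 : f x ≤ f (x ⊔ y) := hx _
    have h2 : f x ≤ f (x ⊓ y) := hx _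
    have h3 : f y ≤ f x := hy x
    constructor
    · intro z; have : f (x ⊓ y) ≤ f x := by linarith
      exact this.trans (hx z)
    · intro z; have : f (x ⊔ y) ≤ f x := by linarith
      exact this.trans (hx z)
  -- xmin equals the componentwise inf of M, which is a minimizer
  have hminf : ∀ z, f (M.inf' hMne id) ≤ f z := by
    refine Finset.inf'_induction hMne id (fun a ha b hb => (hclosed a b ha hb).1) ?_
    intro b hb; exact (hMmem b).1 hb
  have hxmin_eq : xmin = M.inf' hMne id := by
    funext s
    refine (hxmin s).unique ?_
    refine IsLeast.isGLB ⟨⟨M.inf' hMne id, hminf, rfl⟩, ?_⟩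
    rintro i ⟨x, hx, rfl⟩
    have hxM : x ∈ M := (hMmem x).2 hx
    exact (Finset.inf'_le id hxM) s
  have hxminmin : ∀ z, f xmin ≤ f z := by rw [hxmin_eq]; exact hminf
  have hxmin_le : ∀ x : V → Fin (L + 1), (∀ z, f x ≤ f z) → xmin ≤ x := by
    intro x hx s
    exact (hxmin s).1 ⟨x, hx, rfl⟩
  -- xmax equals the componentwise sup of M, which is a minimizer
  have hmsup : ∀ z, f (M.sup' hMne id) ≤ f z := by
    refine Finset.sup'_induction hMne id (fun a ha b hb => (hclosed a b ha hb).2) ?_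
    intro b hb; exact (hMmem b).1 hb
  have hxmax_eq : xmax = M.sup' hMne id := by
    funext s
    refine (hxmax s).unique ?_
    refine IsGreatest.isLUB ⟨⟨M.sup' hMne id, hmsup, rfl⟩, ?_⟩
    rintro i ⟨x, hx, rfl⟩
    have hxM : x ∈ M := (hMmem x).2 hx
    exact (Finset.le_sup' id hxM) s
  have hxmaxmin : ∀ z, f xmax ≤ f z := by rw [hxmax_eq]; exact hmsup
  have hle_xmax : ∀ x : V → Fin (L + 1), (∀ z, f x ≤ f z) → x ≤ xmax := by
    intro x hx s
    exact (hxmax s).1 ⟨x, hx, rfl⟩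
  -- Step 1: joining with xmin does not increase f, strictly if it changes x
  have step1 : ∀ x, f (x ⊔ xmin) ≤ f x ∧ (x ⊔ xmin ≠ x → f (x ⊔ xmin) < f x) := by
    intro x
    have h := hsub x xmin
    have h2 : f xmin ≤ f (x ⊓ xmin) := hxminmin _
    refine ⟨by linarith, ?_⟩
    intro hne
    rcases lt_or_eq_of_le (show f (x ⊔ xmin) ≤ f x by linarith) with h' | h'
    · exact h'
    · exfalso
      have hmin' : ∀ z, f (x ⊓ xmin) ≤ f z := by
        intro z
        have : f (x ⊓ xmin) ≤ f xmin := by linarith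
        exact this.trans (hxminmin z)
      have hle : xmin ≤ x ⊓ xmin := hxmin_le _ hmin'
      have : xmin ≤ x := hle.trans inf_le_left
      exact hne (sup_eq_left.mpr this)
  -- Step 2: meeting with xmax does not increase f, strictly if it changes y
  have step2 : ∀ y, f (y ⊓ xmax) ≤ f y ∧ (y ⊓ xmax ≠ y → f (y ⊓ xmax) < f y) := by
    intro y
    have h := hsub y xmax
    have h2 : f xmax ≤ f (y ⊔ xmax) := hxmaxmin _
    refine ⟨by linarith, ?_⟩
    intro hne
    rcases lt_or_eq_of_le (show f (y ⊓ xmax) ≤ f y by linarith) with h' | h'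
    · exact h'
    · exfalso
      have hmin' : ∀ z, f (y ⊔ xmax) ≤ f z := by
        intro z
        have : f (y ⊔ xmax) ≤ f xmax := by linarith
        exact this.trans (hxmaxmin z)
      have hle : y ⊔ xmax ≤ xmax := hle_xmax _ hmin'
      have : y ≤ xmax := le_sup_left.trans hle
      exact hne (inf_eq_left.mpr this)
  refine ⟨hxmin_le xmax hxmaxmin, ?_, ?_⟩
  · intro x
    exact ((step2 (x ⊔ xmin)).1).trans (step1 x).1
  · intro x hne
    by_cases hy : x ⊔ xmin = x
    · have h2 := (step2 (x ⊔ xmin)).2 (by rw [hy]; rw [hy] at hne; exact hne)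
      calc f ((x ⊔ xmin) ⊓ xmax) < f (x ⊔ xmin) := h2
        _ = f x := by rw [hy]
    · exact ((step2 (x ⊔ xmin)).1).trans_lt ((step1 x).2 hy)
end

section
/- Under the hypotheses of the previous statement, if additionally for all s ∈ V, k ∈ K_s, and x_s < k one has h_s(max(x_s, k)) < h_s(k), then (x^min, L) is a strong autarky for h: h(x ∨ x^min) < h(x) whenever x ∨ x^min ≠ x. -/
open Finset

/-- Under the hypotheses of Statement 9, if additionally
`h_s(max(x_s,k)) < h_s(x_s)` whenever `x_s < k ∈ K_s`, then `(xmin, L)` is a strong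
autarky for `h`: `h(x ⊔ xmin) < h(x)` whenever `x ⊔ xmin ≠ x`. -/
theorem kovtun_sufficient_strong_autarky
    {V : Type*} [Fintype V] [DecidableEq V] (L : ℕ) (E : Finset (V × V))
    (K : V → Set (Fin (L + 1)))
    (h0 : ℝ) (h1 : V → Fin (L + 1) → ℝ)
    (h2 : V × V → Fin (L + 1) → Fin (L + 1) → ℝ)
    (ha : ∀ s, ∀ xs : Fin (L + 1), ∀ k ∈ K s, h1 s (max xs k) ≤ h1 s k)
    (hb : ∀ e ∈ E, ∀ xs xt : Fin (L + 1), ∀ ks ∈ K e.1, ∀ kt ∈ K e.2,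
      h2 e (max xs ks) (max xt kt) ≤ h2 e xs xt)
    (hc : ∀ s, ∀ k ∈ K s, ∀ xs : Fin (L + 1), xs < k → h1 s (max xs k) < h1 s xs)
    (xmin : V → Fin (L + 1)) (hK : ∀ s, xmin s ∈ K s) :
    ∀ x : V → Fin (L + 1), x ⊔ xmin ≠ x →
      h0 + ∑ s, h1 s ((x ⊔ xmin) s) + ∑ e ∈ E, h2 e ((x ⊔ xmin) e.1) ((x ⊔ xmin) e.2) <
      h0 + ∑ s, h1 s (x s) + ∑ e ∈ E, h2 e (x e.1) (x e.2) := by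
  intro x hx
  have happ : ∀ s, (x ⊔ xmin) s = max (x s) (xmin s) := fun s => rfl
  have hle : ∀ s ∈ (univ : Finset V), h1 s ((x ⊔ xmin) s) ≤ h1 s (x s) := by
    intro s _
    rw [happ]
    rcases le_or_gt (xmin s) (x s) with h | h
    · rw [max_eq_left h]
    · exact le_of_lt (hc s (xmin s) (hK s) (x s) h)
  obtain ⟨s0, hs0⟩ : ∃ s, (x ⊔ xmin) s ≠ x s := by
    by_contra hcon
    push_neg at hcon
    exact hx (funext hcon)
  have hxs0 : x s0 < xmin s0 := by
    rcases le_or_gt (xmin s0) (x s0) with h | h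
    · exact absurd (by rw [happ, max_eq_left h]) hs0
    · exact h
  have hsum1 : ∑ s, h1 s ((x ⊔ xmin) s) < ∑ s, h1 s (x s) :=
    Finset.sum_lt_sum hle ⟨s0, mem_univ s0, by
      rw [happ]; exact hc s0 (xmin s0) (hK s0) (x s0) hxs0⟩
  have hsum2 : ∑ e ∈ E, h2 e ((x ⊔ xmin) e.1) ((x ⊔ xmin) e.2) ≤
      ∑ e ∈ E, h2 e (x e.1) (x e.2) := by
    apply Finset.sum_le_sum
    intro e he
    rw [happ, happ]
    exact hb e he (x e.1) (x e.2) (xmin e.1) (hK e.1) (xmin e.2) (hK e.2)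
  linarith
end

section
/- For any μ in the local polytope Λ and any labeling y, the vector ν = μ ⊼ y (defined by truncating μ at y from above) again belongs to the local polytope Λ: its singleton marginals sum to 1 and its pairwise marginals are consistent with its singleton marginals. -/
open Finset

variable {V : Type*}

/-- Membership in the local polytope `Λ`: nonnegativity, normalization and
marginalization constraints. -/
def InLocalPolytope [Fintype V] (L : ℕ) (E : Finset (V × V))
    (μ1 : V → Fin (L + 1) → ℝ) (μ2 : V × V → Fin (L + 1) → Fin (L + 1) → ℝ) : Prop :=
  (∀ s i, 0 ≤ μ1 s i) ∧ (∀ e ∈ E, ∀ i j, 0 ≤ μ2 e i j) ∧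
  (∀ s, ∑ i, μ1 s i = 1) ∧ (∀ e ∈ E, ∑ i, ∑ j, μ2 e i j = 1) ∧
  (∀ e ∈ E, ∀ i, ∑ j, μ2 e i j = μ1 e.1 i) ∧
  (∀ e ∈ E, ∀ j, ∑ i, μ2 e i j = μ1 e.2 j)

/-- Index set used by the upper truncation `μ ⊼ y`: for `i < c` only `i` itself,
for `i = c` all indices `≥ c` (mass above `c` accumulates at `c`). -/
def idxAbove (L : ℕ) (c i : Fin (L + 1)) : Finset (Fin (L + 1)) :=
  if i < c then {i} else Finset.univ.filter (fun i' => c ≤ i')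

/-- Index set used by the lower truncation `μ ⊻ y`. -/
def idxBelow (L : ℕ) (c i : Fin (L + 1)) : Finset (Fin (L + 1)) :=
  if c < i then {i} else Finset.univ.filter (fun i' => i' ≤ c)

/-- Singleton components of `μ ⊼ y` (truncation of `μ` at `y` from above). -/
def trDown1 (L : ℕ) (y : V → Fin (L + 1)) (μ1 : V → Fin (L + 1) → ℝ) :
    V → Fin (L + 1) → ℝ :=
  fun s i => if y s < i then 0 else ∑ i' ∈ idxAbove L (y s) i, μ1 s i'

/-- Pairwise components of `μ ⊼ y`. -/
def trDown2 (L : ℕ) (y : V → Fin (L + 1))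
    (μ2 : V × V → Fin (L + 1) → Fin (L + 1) → ℝ) :
    V × V → Fin (L + 1) → Fin (L + 1) → ℝ :=
  fun e i j => if y e.1 < i ∨ y e.2 < j then 0
    else ∑ i' ∈ idxAbove L (y e.1) i, ∑ j' ∈ idxAbove L (y e.2) j, μ2 e i' j'

/-- Singleton components of `μ ⊻ y` (truncation of `μ` at `y` from below). -/
def trUp1 (L : ℕ) (y : V → Fin (L + 1)) (μ1 : V → Fin (L + 1) → ℝ) :
    V → Fin (L + 1) → ℝ :=
  fun s i => if i < y s then 0 else ∑ i' ∈ idxBelow L (y s) i, μ1 s i'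

/-- Pairwise components of `μ ⊻ y`. -/
def trUp2 (L : ℕ) (y : V → Fin (L + 1))
    (μ2 : V × V → Fin (L + 1) → Fin (L + 1) → ℝ) :
    V × V → Fin (L + 1) → Fin (L + 1) → ℝ :=
  fun e i j => if i < y e.1 ∨ j < y e.2 then 0
    else ∑ i' ∈ idxBelow L (y e.1) i, ∑ j' ∈ idxBelow L (y e.2) j, μ2 e i' j'

/-- The scalar product `⟨f, μ⟩` of an energy vector with a relaxed labeling. -/
def innerE [Fintype V] (L : ℕ) (E : Finset (V × V)) (f0 : ℝ)
    (f1 : V → Fin (L + 1) → ℝ) (f2 : V × V → Fin (L + 1) → Fin (L + 1) → ℝ)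
    (μ1 : V → Fin (L + 1) → ℝ) (μ2 : V × V → Fin (L + 1) → Fin (L + 1) → ℝ) : ℝ :=
  f0 + ∑ s, ∑ i, f1 s i * μ1 s i + ∑ e ∈ E, ∑ i, ∑ j, f2 e i j * μ2 e i j

/-- Singleton components of the indicator vector `φ(x)`. -/
def phi1 (L : ℕ) (x : V → Fin (L + 1)) : V → Fin (L + 1) → ℝ :=
  fun s i => if x s = i then 1 else 0

/-- Pairwise components of the indicator vector `φ(x)`. -/
def phi2 (L : ℕ) (x : V → Fin (L + 1)) :
    V × V → Fin (L + 1) → Fin (L + 1) → ℝ :=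
  fun e i j => if x e.1 = i ∧ x e.2 = j then 1 else 0

/-- The pairwise energy `f(x)` of an (integral) labeling `x`. -/
def energyE [Fintype V] (L : ℕ) (E : Finset (V × V)) (f0 : ℝ)
    (f1 : V → Fin (L + 1) → ℝ) (f2 : V × V → Fin (L + 1) → Fin (L + 1) → ℝ)
    (x : V → Fin (L + 1)) : ℝ :=
  f0 + ∑ s, f1 s (x s) + ∑ e ∈ E, f2 e (x e.1) (x e.2)

lemma sum_ite_idxAbove {L : ℕ} (c : Fin (L + 1)) (g : Fin (L + 1) → ℝ) :
    ∑ i, (if c < i then (0 : ℝ) else ∑ i' ∈ idxAbove L c i, g i') = ∑ i', g i' := by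
  classical
  have h1 : ∑ i, (if c < i then (0 : ℝ) else ∑ i' ∈ idxAbove L c i, g i')
      = ∑ i ∈ univ.filter (fun i => ¬ c < i), ∑ i' ∈ idxAbove L c i, g i' := by
    rw [Finset.sum_filter]
    exact Finset.sum_congr rfl fun i _ => by split <;> simp_all
  have h2 : univ.filter (fun i : Fin (L + 1) => ¬ c < i)
      = insert c (univ.filter (fun i => i < c)) := by
    ext i
    simp [not_lt, le_iff_lt_or_eq, or_comm, eq_comm]
  rw [h1, h2, Finset.sum_insert (by simp)]
  have h3 : ∑ i ∈ univ.filter (fun i => i < c), ∑ i' ∈ idxAbove L c i, g i'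
      = ∑ i ∈ univ.filter (fun i => i < c), g i := by
    refine Finset.sum_congr rfl fun i hi => ?_
    simp only [Finset.mem_filter] at hi
    simp [idxAbove, hi.2]
  have h4 : idxAbove L c c = univ.filter (fun i' => c ≤ i') := by
    simp [idxAbove]
  rw [h3, h4]
  have hs := Finset.sum_filter_add_sum_filter_not univ (fun i : Fin (L + 1) => i < c) g
  have hf : univ.filter (fun i' : Fin (L + 1) => c ≤ i')
      = univ.filter (fun i => ¬ i < c) := by ext i; simp [not_lt]
  rw [hf, add_comm]
  exact hs

/-- For `μ ∈ Λ` and a labeling `y`, the truncation `μ ⊼ y` again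
belongs to the local polytope `Λ`. -/
theorem trDown_mem_polytope {V : Type*} [Fintype V] (L : ℕ) (E : Finset (V × V))
    (μ1 : V → Fin (L + 1) → ℝ) (μ2 : V × V → Fin (L + 1) → Fin (L + 1) → ℝ)
    (hμ : InLocalPolytope L E μ1 μ2) (y : V → Fin (L + 1)) :
    InLocalPolytope L E (trDown1 L y μ1) (trDown2 L y μ2) := by
  classical
  obtain ⟨h1, h2, h3, h4, h5, h6⟩ := hμ
  have nn1 : ∀ s i, 0 ≤ trDown1 L y μ1 s i := by
    intro s i
    unfold trDown1
    split
    · exact le_refl 0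
    · exact Finset.sum_nonneg fun _ _ => h1 s _
  have nn2 : ∀ e ∈ E, ∀ i j, 0 ≤ trDown2 L y μ2 e i j := by
    intro e he i j
    unfold trDown2
    split
    · exact le_refl 0
    · exact Finset.sum_nonneg fun _ _ => Finset.sum_nonneg fun _ _ => h2 e he _ _
  have norm1 : ∀ s, ∑ i, trDown1 L y μ1 s i = 1 := by
    intro s
    unfold trDown1
    rw [sum_ite_idxAbove]
    exact h3 s
  have marg1 : ∀ e ∈ E, ∀ i, ∑ j, trDown2 L y μ2 e i j = trDown1 L y μ1 e.1 i := by
    intro e he i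
    unfold trDown2 trDown1
    by_cases hi : y e.1 < i
    · simp [hi]
    · have key : ∀ j, (if y e.1 < i ∨ y e.2 < j then (0 : ℝ)
            else ∑ i' ∈ idxAbove L (y e.1) i, ∑ j' ∈ idxAbove L (y e.2) j, μ2 e i' j')
          = (if y e.2 < j then (0 : ℝ)
            else ∑ j' ∈ idxAbove L (y e.2) j,
              ∑ i' ∈ idxAbove L (y e.1) i, μ2 e i' j') := by
        intro j
        by_cases hj : y e.2 < j
        · simp [hj]
        · rw [if_neg (by tauto), if_neg hj, Finset.sum_comm]
      rw [if_neg hi]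
      calc ∑ j, (if y e.1 < i ∨ y e.2 < j then (0 : ℝ)
              else ∑ i' ∈ idxAbove L (y e.1) i, ∑ j' ∈ idxAbove L (y e.2) j, μ2 e i' j')
          = ∑ j, (if y e.2 < j then (0 : ℝ)
              else ∑ j' ∈ idxAbove L (y e.2) j,
                ∑ i' ∈ idxAbove L (y e.1) i, μ2 e i' j') :=
            Finset.sum_congr rfl fun j _ => key j
        _ = ∑ j', ∑ i' ∈ idxAbove L (y e.1) i, μ2 e i' j' := sum_ite_idxAbove _ _
        _ = ∑ i' ∈ idxAbove L (y e.1) i, ∑ j', μ2 e i' j' := Finset.sum_comm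
        _ = ∑ i' ∈ idxAbove L (y e.1) i, μ1 e.1 i' :=
            Finset.sum_congr rfl fun i' _ => h5 e he i'
  have marg2 : ∀ e ∈ E, ∀ j, ∑ i, trDown2 L y μ2 e i j = trDown1 L y μ1 e.2 j := by
    intro e he j
    unfold trDown2 trDown1
    by_cases hj : y e.2 < j
    · simp [hj]
    · have key : ∀ i, (if y e.1 < i ∨ y e.2 < j then (0 : ℝ)
            else ∑ i' ∈ idxAbove L (y e.1) i, ∑ j' ∈ idxAbove L (y e.2) j, μ2 e i' j')
          = (if y e.1 < i then (0 : ℝ)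
            else ∑ i' ∈ idxAbove L (y e.1) i,
              ∑ j' ∈ idxAbove L (y e.2) j, μ2 e i' j') := by
        intro i
        by_cases hi : y e.1 < i
        · simp [hi]
        · rw [if_neg (by tauto), if_neg hi]
      rw [if_neg hj]
      calc ∑ i, (if y e.1 < i ∨ y e.2 < j then (0 : ℝ)
              else ∑ i' ∈ idxAbove L (y e.1) i, ∑ j' ∈ idxAbove L (y e.2) j, μ2 e i' j')
          = ∑ i, (if y e.1 < i then (0 : ℝ)
              else ∑ i' ∈ idxAbove L (y e.1) i,
                ∑ j' ∈ idxAbove L (y e.2) j, μ2 e i' j') :=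
            Finset.sum_congr rfl fun i _ => key i
        _ = ∑ i', ∑ j' ∈ idxAbove L (y e.2) j, μ2 e i' j' := sum_ite_idxAbove _ _
        _ = ∑ j' ∈ idxAbove L (y e.2) j, ∑ i', μ2 e i' j' := Finset.sum_comm
        _ = ∑ j' ∈ idxAbove L (y e.2) j, μ1 e.2 j' :=
            Finset.sum_congr rfl fun j' _ => h6 e he j'
  refine ⟨nn1, nn2, norm1, ?_, marg1, marg2⟩
  intro e he
  rw [Finset.sum_congr rfl fun i _ => marg1 e he i]
  exact norm1 e.1
end

section
/- If f is a submodular pairwise energy, then for every μ in the local polytope Λ and every labeling y: ⟨μ, f⟩ + ⟨φ(y), f⟩ ≥ ⟨μ ⊼ y, f⟩ + ⟨μ ⊻ y, f⟩. -/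
open Finset

variable {V : Type*}

lemma fiberInf {L : ℕ} (c i : Fin (L + 1)) :
    Finset.univ.filter (fun i' => i' ⊓ c = i) =
      if c < i then ∅ else idxAbove L c i := by
  unfold idxAbove
  ext i'
  simp only [mem_filter, mem_univ, true_and]
  rcases lt_trichotomy i c with h | h | h
  · rw [if_neg (not_lt.mpr h.le), if_pos h, mem_singleton]
    constructor
    · intro he
      rcases le_total i' c with h2 | h2
      · rwa [inf_eq_left.mpr h2] at he
      · rw [inf_eq_right.mpr h2] at he
        exact absurd he.symm (ne_of_lt h)
    · rintro rfl; exact inf_eq_left.mpr h.le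
  · subst h
    rw [if_neg (lt_irrefl _), if_neg (lt_irrefl _), mem_filter]
    simp [inf_eq_right]
  · rw [if_pos h]
    simp only [notMem_empty, iff_false]
    intro he
    exact absurd h (not_lt.mpr (he ▸ inf_le_right))

lemma fiberSup {L : ℕ} (c i : Fin (L + 1)) :
    Finset.univ.filter (fun i' => i' ⊔ c = i) =
      if i < c then ∅ else idxBelow L c i := by
  unfold idxBelow
  ext i'
  simp only [mem_filter, mem_univ, true_and]
  rcases lt_trichotomy i c with h | h | h
  · rw [if_pos h]
    simp only [notMem_empty, iff_false]
    intro he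
    exact absurd h (not_lt.mpr (he ▸ le_sup_right))
  · subst h
    rw [if_neg (lt_irrefl _), if_neg (lt_irrefl _), mem_filter]
    simp [sup_eq_right]
  · rw [if_neg (not_lt.mpr h.le), if_pos h, mem_singleton]
    constructor
    · intro he
      rcases le_total i' c with h2 | h2
      · rw [sup_eq_right.mpr h2] at he
        exact absurd he (ne_of_lt h)
      · rwa [sup_eq_left.mpr h2] at he
    · rintro rfl; exact sup_eq_left.mpr h.le

lemma sumFib {L : ℕ} (m : Fin (L + 1) → Fin (L + 1)) (g ν : Fin (L + 1) → ℝ) :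
    ∑ i, g i * (∑ i' ∈ Finset.univ.filter (fun i' => m i' = i), ν i')
      = ∑ i', g (m i') * ν i' := by
  rw [← Finset.sum_fiberwise Finset.univ m (fun i' => g (m i') * ν i')]
  refine Finset.sum_congr rfl fun i _ => ?_
  rw [Finset.mul_sum]
  exact Finset.sum_congr rfl fun i' hi' => by rw [(Finset.mem_filter.mp hi').2]

lemma sumFib2 {L : ℕ} (m1 m2 : Fin (L + 1) → Fin (L + 1))
    (g ν : Fin (L + 1) → Fin (L + 1) → ℝ) :
    ∑ i, ∑ j, g i j * (∑ i' ∈ Finset.univ.filter (fun i' => m1 i' = i),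
        ∑ j' ∈ Finset.univ.filter (fun j' => m2 j' = j), ν i' j')
      = ∑ i', ∑ j', g (m1 i') (m2 j') * ν i' j' := by
  calc ∑ i, ∑ j, g i j * (∑ i' ∈ Finset.univ.filter (fun i' => m1 i' = i),
        ∑ j' ∈ Finset.univ.filter (fun j' => m2 j' = j), ν i' j')
      = ∑ i, ∑ j', g i (m2 j') *
          ∑ i' ∈ Finset.univ.filter (fun i' => m1 i' = i), ν i' j' := by
        refine Finset.sum_congr rfl fun i _ => ?_
        rw [← sumFib m2 (g i) (fun j' => ∑ i' ∈ Finset.univ.filter (fun i' => m1 i' = i), ν i' j')]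
        exact Finset.sum_congr rfl fun j _ => by rw [Finset.sum_comm]
    _ = ∑ j', ∑ i, g i (m2 j') *
          ∑ i' ∈ Finset.univ.filter (fun i' => m1 i' = i), ν i' j' := Finset.sum_comm
    _ = ∑ j', ∑ i', g (m1 i') (m2 j') * ν i' j' := by
        exact Finset.sum_congr rfl fun j' _ => sumFib m1 (fun i => g i (m2 j')) (fun i' => ν i' j')
    _ = ∑ i', ∑ j', g (m1 i') (m2 j') * ν i' j' := Finset.sum_comm

lemma trDown1_eq {L : ℕ} (y : V → Fin (L + 1)) (μ1 : V → Fin (L + 1) → ℝ)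
    (s : V) (i : Fin (L + 1)) :
    trDown1 L y μ1 s i = ∑ i' ∈ Finset.univ.filter (fun i' => i' ⊓ y s = i), μ1 s i' := by
  rw [fiberInf, trDown1]
  split <;> simp_all

lemma trUp1_eq {L : ℕ} (y : V → Fin (L + 1)) (μ1 : V → Fin (L + 1) → ℝ)
    (s : V) (i : Fin (L + 1)) :
    trUp1 L y μ1 s i = ∑ i' ∈ Finset.univ.filter (fun i' => i' ⊔ y s = i), μ1 s i' := by
  rw [fiberSup, trUp1]
  split <;> simp_all

lemma trDown2_eq {L : ℕ} (y : V → Fin (L + 1))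
    (μ2 : V × V → Fin (L + 1) → Fin (L + 1) → ℝ) (e : V × V) (i j : Fin (L + 1)) :
    trDown2 L y μ2 e i j = ∑ i' ∈ Finset.univ.filter (fun i' => i' ⊓ y e.1 = i),
      ∑ j' ∈ Finset.univ.filter (fun j' => j' ⊓ y e.2 = j), μ2 e i' j' := by
  rw [fiberInf, fiberInf, trDown2]
  by_cases h1 : y e.1 < i <;> by_cases h2 : y e.2 < j <;> simp [h1, h2]

lemma trUp2_eq {L : ℕ} (y : V → Fin (L + 1))
    (μ2 : V × V → Fin (L + 1) → Fin (L + 1) → ℝ) (e : V × V) (i j : Fin (L + 1)) :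
    trUp2 L y μ2 e i j = ∑ i' ∈ Finset.univ.filter (fun i' => i' ⊔ y e.1 = i),
      ∑ j' ∈ Finset.univ.filter (fun j' => j' ⊔ y e.2 = j), μ2 e i' j' := by
  rw [fiberSup, fiberSup, trUp2]
  by_cases h1 : i < y e.1 <;> by_cases h2 : j < y e.2 <;> simp [h1, h2]

lemma infSupAdd {L : ℕ} (g : Fin (L + 1) → ℝ) (a b : Fin (L + 1)) :
    g (a ⊓ b) + g (a ⊔ b) = g a + g b := by
  rcases le_total a b with h | h
  · rw [inf_eq_left.mpr h, sup_eq_right.mpr h]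
  · rw [inf_eq_right.mpr h, sup_eq_left.mpr h, add_comm]
/-- For a submodular pairwise energy `f`, every `μ ∈ Λ` and every
labeling `y` satisfy `⟨μ,f⟩ + ⟨φ(y),f⟩ ≥ ⟨μ ⊼ y, f⟩ + ⟨μ ⊻ y, f⟩`. -/
theorem relaxed_submodular_inequality {V : Type*} [Fintype V] (L : ℕ)
    (E : Finset (V × V)) (f0 : ℝ) (f1 : V → Fin (L + 1) → ℝ)
    (f2 : V × V → Fin (L + 1) → Fin (L + 1) → ℝ)
    (hsub : ∀ e ∈ E, ∀ a b : Fin (L + 1) × Fin (L + 1),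
      f2 e (a ⊔ b).1 (a ⊔ b).2 + f2 e (a ⊓ b).1 (a ⊓ b).2 ≤
      f2 e a.1 a.2 + f2 e b.1 b.2)
    (μ1 : V → Fin (L + 1) → ℝ) (μ2 : V × V → Fin (L + 1) → Fin (L + 1) → ℝ)
    (hμ : InLocalPolytope L E μ1 μ2) (y : V → Fin (L + 1)) :
    innerE L E f0 f1 f2 (trDown1 L y μ1) (trDown2 L y μ2) +
      innerE L E f0 f1 f2 (trUp1 L y μ1) (trUp2 L y μ2) ≤
    innerE L E f0 f1 f2 μ1 μ2 + innerE L E f0 f1 f2 (phi1 L y) (phi2 L y) := by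
  obtain ⟨hpos1, hpos2, hnorm1, hnorm2, -, -⟩ := hμ
  have hsing : ∀ s : V,
      (∑ i, f1 s i * trDown1 L y μ1 s i) + (∑ i, f1 s i * trUp1 L y μ1 s i)
        = (∑ i, f1 s i * μ1 s i) + (∑ i, f1 s i * phi1 L y s i) := by
    intro s
    have hd : ∑ i, f1 s i * trDown1 L y μ1 s i
        = ∑ i', f1 s (i' ⊓ y s) * μ1 s i' := by
      rw [← sumFib (fun i' => i' ⊓ y s) (f1 s) (μ1 s)]
      exact Finset.sum_congr rfl fun i _ => by rw [trDown1_eq]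
    have hu : ∑ i, f1 s i * trUp1 L y μ1 s i
        = ∑ i', f1 s (i' ⊔ y s) * μ1 s i' := by
      rw [← sumFib (fun i' => i' ⊔ y s) (f1 s) (μ1 s)]
      exact Finset.sum_congr rfl fun i _ => by rw [trUp1_eq]
    have hp : ∑ i, f1 s i * phi1 L y s i = f1 s (y s) := by
      simp [phi1, mul_ite, mul_one, mul_zero, Finset.sum_ite_eq]
    have key : ∀ i' : Fin (L + 1),
        f1 s (i' ⊓ y s) * μ1 s i' + f1 s (i' ⊔ y s) * μ1 s i'
          = f1 s i' * μ1 s i' + f1 s (y s) * μ1 s i' := by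
      intro i'
      rw [← add_mul, ← add_mul, infSupAdd (f1 s) i' (y s)]
    rw [hd, hu, hp, ← Finset.sum_add_distrib,
      Finset.sum_congr rfl fun i' _ => key i', Finset.sum_add_distrib,
      ← Finset.mul_sum, hnorm1 s, mul_one]
  have hpair : ∀ e ∈ E,
      (∑ i, ∑ j, f2 e i j * trDown2 L y μ2 e i j)
        + (∑ i, ∑ j, f2 e i j * trUp2 L y μ2 e i j)
      ≤ (∑ i, ∑ j, f2 e i j * μ2 e i j)
        + (∑ i, ∑ j, f2 e i j * phi2 L y e i j) := by
    intro e he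
    have hd : ∑ i, ∑ j, f2 e i j * trDown2 L y μ2 e i j
        = ∑ i', ∑ j', f2 e (i' ⊓ y e.1) (j' ⊓ y e.2) * μ2 e i' j' := by
      rw [← sumFib2 (fun i' => i' ⊓ y e.1) (fun j' => j' ⊓ y e.2) (f2 e) (μ2 e)]
      exact Finset.sum_congr rfl fun i _ => Finset.sum_congr rfl fun j _ => by
        rw [trDown2_eq]
    have hu : ∑ i, ∑ j, f2 e i j * trUp2 L y μ2 e i j
        = ∑ i', ∑ j', f2 e (i' ⊔ y e.1) (j' ⊔ y e.2) * μ2 e i' j' := by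
      rw [← sumFib2 (fun i' => i' ⊔ y e.1) (fun j' => j' ⊔ y e.2) (f2 e) (μ2 e)]
      exact Finset.sum_congr rfl fun i _ => Finset.sum_congr rfl fun j _ => by
        rw [trUp2_eq]
    have hp : ∑ i, ∑ j, f2 e i j * phi2 L y e i j = f2 e (y e.1) (y e.2) := by
      simp [phi2, mul_ite, mul_one, mul_zero, ite_and, Finset.sum_ite_eq]
    rw [hd, hu, hp]
    have step : ∑ i', ∑ j', f2 e (i' ⊓ y e.1) (j' ⊓ y e.2) * μ2 e i' j'
          + ∑ i', ∑ j', f2 e (i' ⊔ y e.1) (j' ⊔ y e.2) * μ2 e i' j'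
        ≤ ∑ i', ∑ j', (f2 e i' j' + f2 e (y e.1) (y e.2)) * μ2 e i' j' := by
      rw [← Finset.sum_add_distrib]
      refine Finset.sum_le_sum fun i' _ => ?_
      rw [← Finset.sum_add_distrib]
      refine Finset.sum_le_sum fun j' _ => ?_
      rw [← add_mul]
      refine mul_le_mul_of_nonneg_right ?_ (hpos2 e he i' j')
      have h := hsub e he (i', j') (y e.1, y e.2)
      simpa [add_comm] using h
    refine step.trans (le_of_eq ?_)
    have : ∀ i' : Fin (L + 1),
        ∑ j', (f2 e i' j' + f2 e (y e.1) (y e.2)) * μ2 e i' j'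
          = ∑ j', f2 e i' j' * μ2 e i' j'
            + f2 e (y e.1) (y e.2) * ∑ j', μ2 e i' j' := by
      intro i'
      rw [Finset.mul_sum, ← Finset.sum_add_distrib]
      exact Finset.sum_congr rfl fun j' _ => by ring
    rw [Finset.sum_congr rfl fun i' _ => this i', Finset.sum_add_distrib,
      ← Finset.mul_sum, hnorm2 e he, mul_one]
  have hA := Finset.sum_congr rfl fun s (_ : s ∈ (Finset.univ : Finset V)) => hsing s
  rw [Finset.sum_add_distrib, Finset.sum_add_distrib] at hA
  have hB := Finset.sum_le_sum hpair
  rw [Finset.sum_add_distrib, Finset.sum_add_distrib] at hB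
  simp only [innerE]
  linarith
end

section
/- Let f be a submodular pairwise energy whose LP relaxation over the local polytope is tight (min over Λ equals min over labelings), and let x* minimize f over labelings. Then for every μ ∈ Λ: ⟨μ ⊼ x*, f⟩ ≤ ⟨μ, f⟩ and ⟨μ ⊻ x*, f⟩ ≤ ⟨μ, f⟩. -/
open Finset

variable {V : Type*}

def pushF (L : ℕ) (T : Fin (L + 1) → Fin (L + 1)) (i : Fin (L + 1)) : Finset (Fin (L + 1)) :=
  Finset.univ.filter (fun i' => T i' = i)

lemma pushF_inf_empty (L : ℕ) {c i : Fin (L + 1)} (h : c < i) :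
    pushF L (fun i' => i' ⊓ c) i = ∅ := by
  ext i'
  simp only [pushF, Finset.mem_filter, Finset.mem_univ, true_and, Finset.notMem_empty,
    iff_false]
  intro he
  exact absurd (he ▸ inf_le_right) (not_le.2 h)

lemma pushF_sup_empty (L : ℕ) {c i : Fin (L + 1)} (h : i < c) :
    pushF L (fun i' => i' ⊔ c) i = ∅ := by
  ext i'
  simp only [pushF, Finset.mem_filter, Finset.mem_univ, true_and, Finset.notMem_empty,
    iff_false]
  intro he
  exact absurd (he ▸ le_sup_right) (not_le.2 h)

lemma idxAbove_eq (L : ℕ) {c i : Fin (L + 1)} (h : ¬ c < i) :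
    idxAbove L c i = pushF L (fun i' => i' ⊓ c) i := by
  by_cases h2 : i < c
  · rw [idxAbove, if_pos h2]
    ext i'
    simp only [Finset.mem_singleton, pushF, Finset.mem_filter, Finset.mem_univ, true_and]
    constructor
    · rintro rfl; exact inf_eq_left.2 h2.le
    · intro he
      rcases le_total i' c with hc | hc
      · rwa [inf_eq_left.2 hc] at he
      · rw [inf_eq_right.2 hc] at he; exact absurd he (ne_of_gt h2)
  · have h3 : i = c := le_antisymm (not_lt.1 h) (not_lt.1 h2)
    subst h3
    rw [idxAbove, if_neg (lt_irrefl _)]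
    ext i'
    simp [pushF, inf_eq_right]

lemma idxBelow_eq (L : ℕ) {c i : Fin (L + 1)} (h : ¬ i < c) :
    idxBelow L c i = pushF L (fun i' => i' ⊔ c) i := by
  by_cases h2 : c < i
  · rw [idxBelow, if_pos h2]
    ext i'
    simp only [Finset.mem_singleton, pushF, Finset.mem_filter, Finset.mem_univ, true_and]
    constructor
    · rintro rfl; exact sup_eq_left.2 h2.le
    · intro he
      rcases le_total i' c with hc | hc
      · rw [sup_eq_right.2 hc] at he; exact absurd he (ne_of_lt h2)
      · rwa [sup_eq_left.2 hc] at he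
  · have h3 : i = c := le_antisymm (not_lt.1 h2) (not_lt.1 h)
    subst h3
    rw [idxBelow, if_neg (lt_irrefl _)]
    ext i'
    simp [pushF, sup_eq_right]

lemma iteAbove (L : ℕ) (c i : Fin (L + 1)) (g : Fin (L + 1) → ℝ) :
    (if c < i then (0:ℝ) else ∑ i' ∈ idxAbove L c i, g i')
      = ∑ i' ∈ pushF L (fun i' => i' ⊓ c) i, g i' := by
  by_cases h : c < i
  · rw [if_pos h, pushF_inf_empty L h, Finset.sum_empty]
  · rw [if_neg h, idxAbove_eq L h]

lemma iteBelow (L : ℕ) (c i : Fin (L + 1)) (g : Fin (L + 1) → ℝ) :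
    (if i < c then (0:ℝ) else ∑ i' ∈ idxBelow L c i, g i')
      = ∑ i' ∈ pushF L (fun i' => i' ⊔ c) i, g i' := by
  by_cases h : i < c
  · rw [if_pos h, pushF_sup_empty L h, Finset.sum_empty]
  · rw [if_neg h, idxBelow_eq L h]

lemma iteAbove2 (L : ℕ) (c1 c2 i j : Fin (L + 1)) (g : Fin (L + 1) → Fin (L + 1) → ℝ) :
    (if c1 < i ∨ c2 < j then (0:ℝ)
      else ∑ i' ∈ idxAbove L c1 i, ∑ j' ∈ idxAbove L c2 j, g i' j')
      = ∑ i' ∈ pushF L (fun i' => i' ⊓ c1) i, ∑ j' ∈ pushF L (fun j' => j' ⊓ c2) j, g i' j' := by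
  by_cases h1 : c1 < i
  · rw [if_pos (Or.inl h1), pushF_inf_empty L h1, Finset.sum_empty]
  · by_cases h2 : c2 < j
    · rw [if_pos (Or.inr h2), pushF_inf_empty L h2]
      simp
    · rw [if_neg (by tauto), idxAbove_eq L h1]
      exact Finset.sum_congr rfl fun i' _ => by rw [idxAbove_eq L h2]

lemma iteBelow2 (L : ℕ) (c1 c2 i j : Fin (L + 1)) (g : Fin (L + 1) → Fin (L + 1) → ℝ) :
    (if i < c1 ∨ j < c2 then (0:ℝ)
      else ∑ i' ∈ idxBelow L c1 i, ∑ j' ∈ idxBelow L c2 j, g i' j')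
      = ∑ i' ∈ pushF L (fun i' => i' ⊔ c1) i, ∑ j' ∈ pushF L (fun j' => j' ⊔ c2) j, g i' j' := by
  by_cases h1 : i < c1
  · rw [if_pos (Or.inl h1), pushF_sup_empty L h1, Finset.sum_empty]
  · by_cases h2 : j < c2
    · rw [if_pos (Or.inr h2), pushF_sup_empty L h2]
      simp
    · rw [if_neg (by tauto), idxBelow_eq L h1]
      exact Finset.sum_congr rfl fun i' _ => by rw [idxBelow_eq L h2]

lemma sum_push (L : ℕ) (T : Fin (L + 1) → Fin (L + 1)) (w g : Fin (L + 1) → ℝ) :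
    ∑ i, w i * ∑ i' ∈ pushF L T i, g i' = ∑ i', w (T i') * g i' := by
  calc ∑ i, w i * ∑ i' ∈ pushF L T i, g i'
      = ∑ i, ∑ i' ∈ Finset.univ.filter (fun i' => T i' = i), w (T i') * g i' := by
        refine Finset.sum_congr rfl fun i _ => ?_
        rw [Finset.mul_sum]
        exact Finset.sum_congr rfl fun i' hi' => by rw [(Finset.mem_filter.1 hi').2]
    _ = ∑ i', w (T i') * g i' := Finset.sum_fiberwise _ _ _

lemma sum_push_one (L : ℕ) (T : Fin (L + 1) → Fin (L + 1)) (g : Fin (L + 1) → ℝ) :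
    ∑ i, ∑ i' ∈ pushF L T i, g i' = ∑ i', g i' := Finset.sum_fiberwise _ _ _

lemma sum_push2 (L : ℕ) (T1 T2 : Fin (L + 1) → Fin (L + 1))
    (w g : Fin (L + 1) → Fin (L + 1) → ℝ) :
    ∑ i, ∑ j, w i j * ∑ i' ∈ pushF L T1 i, ∑ j' ∈ pushF L T2 j, g i' j'
      = ∑ i', ∑ j', w (T1 i') (T2 j') * g i' j' := by
  have step1 : ∀ i, ∑ j, w i j * ∑ i' ∈ pushF L T1 i, ∑ j' ∈ pushF L T2 j, g i' j'
      = ∑ j', w i (T2 j') * ∑ i' ∈ pushF L T1 i, g i' j' := by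
    intro i
    rw [← sum_push L T2 (w i) (fun j' => ∑ i' ∈ pushF L T1 i, g i' j')]
    exact Finset.sum_congr rfl fun j _ => by rw [Finset.sum_comm]
  calc ∑ i, ∑ j, w i j * ∑ i' ∈ pushF L T1 i, ∑ j' ∈ pushF L T2 j, g i' j'
      = ∑ i, ∑ j', w i (T2 j') * ∑ i' ∈ pushF L T1 i, g i' j' :=
        Finset.sum_congr rfl fun i _ => step1 i
    _ = ∑ j', ∑ i, w i (T2 j') * ∑ i' ∈ pushF L T1 i, g i' j' := Finset.sum_comm
    _ = ∑ j', ∑ i', w (T1 i') (T2 j') * g i' j' :=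
        Finset.sum_congr rfl fun j' _ => sum_push L T1 (fun i => w i (T2 j')) (fun i' => g i' j')
    _ = ∑ i', ∑ j', w (T1 i') (T2 j') * g i' j' := Finset.sum_comm

lemma inLocal_push [Fintype V] (L : ℕ) (E : Finset (V × V))
    {μ1 : V → Fin (L + 1) → ℝ} {μ2 : V × V → Fin (L + 1) → Fin (L + 1) → ℝ}
    (T : V → Fin (L + 1) → Fin (L + 1)) (h : InLocalPolytope L E μ1 μ2) :
    InLocalPolytope L E (fun s i => ∑ i' ∈ pushF L (T s) i, μ1 s i')
      (fun e i j => ∑ i' ∈ pushF L (T e.1) i, ∑ j' ∈ pushF L (T e.2) j, μ2 e i' j') := by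
  obtain ⟨h1, h2, h3, h4, h5, h6⟩ := h
  refine ⟨fun s i => Finset.sum_nonneg fun i' _ => h1 s i',
    fun e he i j => Finset.sum_nonneg fun i' _ => Finset.sum_nonneg fun j' _ => h2 e he i' j',
    fun s => by rw [sum_push_one]; exact h3 s, ?_, ?_, ?_⟩
  · intro e he
    calc ∑ i, ∑ j, ∑ i' ∈ pushF L (T e.1) i, ∑ j' ∈ pushF L (T e.2) j, μ2 e i' j'
        = ∑ i, ∑ i' ∈ pushF L (T e.1) i, ∑ j, ∑ j' ∈ pushF L (T e.2) j, μ2 e i' j' :=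
          Finset.sum_congr rfl fun i _ => Finset.sum_comm
      _ = ∑ i, ∑ i' ∈ pushF L (T e.1) i, ∑ j', μ2 e i' j' :=
          Finset.sum_congr rfl fun i _ => Finset.sum_congr rfl fun i' _ =>
            sum_push_one L (T e.2) _
      _ = ∑ i', ∑ j', μ2 e i' j' := sum_push_one L (T e.1) _
      _ = 1 := h4 e he
  · intro e he i
    calc ∑ j, ∑ i' ∈ pushF L (T e.1) i, ∑ j' ∈ pushF L (T e.2) j, μ2 e i' j'
        = ∑ i' ∈ pushF L (T e.1) i, ∑ j, ∑ j' ∈ pushF L (T e.2) j, μ2 e i' j' :=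
          Finset.sum_comm
      _ = ∑ i' ∈ pushF L (T e.1) i, ∑ j', μ2 e i' j' :=
          Finset.sum_congr rfl fun i' _ => sum_push_one L (T e.2) _
      _ = ∑ i' ∈ pushF L (T e.1) i, μ1 e.1 i' :=
          Finset.sum_congr rfl fun i' _ => h5 e he i'
  · intro e he j
    calc ∑ i, ∑ i' ∈ pushF L (T e.1) i, ∑ j' ∈ pushF L (T e.2) j, μ2 e i' j'
        = ∑ i', ∑ j' ∈ pushF L (T e.2) j, μ2 e i' j' := sum_push_one L (T e.1) _
      _ = ∑ j' ∈ pushF L (T e.2) j, ∑ i', μ2 e i' j' := Finset.sum_comm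
      _ = ∑ j' ∈ pushF L (T e.2) j, μ1 e.2 j' :=
          Finset.sum_congr rfl fun j' _ => h6 e he j'

lemma innerE_push [Fintype V] (L : ℕ) (E : Finset (V × V)) (f0 : ℝ)
    (f1 : V → Fin (L + 1) → ℝ) (f2 : V × V → Fin (L + 1) → Fin (L + 1) → ℝ)
    (μ1 : V → Fin (L + 1) → ℝ) (μ2 : V × V → Fin (L + 1) → Fin (L + 1) → ℝ)
    (T : V → Fin (L + 1) → Fin (L + 1)) :
    innerE L E f0 f1 f2 (fun s i => ∑ i' ∈ pushF L (T s) i, μ1 s i')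
      (fun e i j => ∑ i' ∈ pushF L (T e.1) i, ∑ j' ∈ pushF L (T e.2) j, μ2 e i' j')
      = f0 + ∑ s, ∑ i', f1 s (T s i') * μ1 s i'
        + ∑ e ∈ E, ∑ i', ∑ j', f2 e (T e.1 i') (T e.2 j') * μ2 e i' j' := by
  unfold innerE
  congr 1
  · congr 1
    exact Finset.sum_congr rfl fun s _ => sum_push L (T s) _ _
  · exact Finset.sum_congr rfl fun e _ => sum_push2 L (T e.1) (T e.2) _ _

/-- If `f` is submodular, its LP relaxation over `Λ` is tight, and
`xstar` minimizes `f` over labelings, then truncating any `μ ∈ Λ` at `xstar`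
(from above or below) does not increase `⟨f, μ⟩`. -/
theorem relaxed_projection {V : Type*} [Fintype V] (L : ℕ) (E : Finset (V × V))
    (f0 : ℝ) (f1 : V → Fin (L + 1) → ℝ) (f2 : V × V → Fin (L + 1) → Fin (L + 1) → ℝ)
    (hsub : ∀ e ∈ E, ∀ a b : Fin (L + 1) × Fin (L + 1),
      f2 e (a ⊔ b).1 (a ⊔ b).2 + f2 e (a ⊓ b).1 (a ⊓ b).2 ≤
      f2 e a.1 a.2 + f2 e b.1 b.2)
    (xstar : V → Fin (L + 1))
    (hmin : ∀ x : V → Fin (L + 1), energyE L E f0 f1 f2 xstar ≤ energyE L E f0 f1 f2 x)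
    (htight : ∀ μ1 μ2, InLocalPolytope L E μ1 μ2 →
      energyE L E f0 f1 f2 xstar ≤ innerE L E f0 f1 f2 μ1 μ2) :
    ∀ μ1 μ2, InLocalPolytope L E μ1 μ2 →
      innerE L E f0 f1 f2 (trDown1 L xstar μ1) (trDown2 L xstar μ2) ≤
        innerE L E f0 f1 f2 μ1 μ2 ∧
      innerE L E f0 f1 f2 (trUp1 L xstar μ1) (trUp2 L xstar μ2) ≤
        innerE L E f0 f1 f2 μ1 μ2 := by
  intro mu1 mu2 hmu
  have hD1 : trDown1 L xstar mu1
      = fun s i => ∑ i' ∈ pushF L (fun i' => i' ⊓ xstar s) i, mu1 s i' :=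
    funext fun s => funext fun i => iteAbove L (xstar s) i (mu1 s)
  have hD2 : trDown2 L xstar mu2
      = fun e i j => ∑ i' ∈ pushF L (fun i' => i' ⊓ xstar e.1) i,
          ∑ j' ∈ pushF L (fun j' => j' ⊓ xstar e.2) j, mu2 e i' j' :=
    funext fun e => funext fun i => funext fun j =>
      iteAbove2 L (xstar e.1) (xstar e.2) i j (mu2 e)
  have hU1 : trUp1 L xstar mu1
      = fun s i => ∑ i' ∈ pushF L (fun i' => i' ⊔ xstar s) i, mu1 s i' :=
    funext fun s => funext fun i => iteBelow L (xstar s) i (mu1 s)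
  have hU2 : trUp2 L xstar mu2
      = fun e i j => ∑ i' ∈ pushF L (fun i' => i' ⊔ xstar e.1) i,
          ∑ j' ∈ pushF L (fun j' => j' ⊔ xstar e.2) j, mu2 e i' j' :=
    funext fun e => funext fun i => funext fun j =>
      iteBelow2 L (xstar e.1) (xstar e.2) i j (mu2 e)
  have hmemD : InLocalPolytope L E (trDown1 L xstar mu1) (trDown2 L xstar mu2) := by
    rw [hD1, hD2]; exact inLocal_push L E (fun s i' => i' ⊓ xstar s) hmu
  have hmemU : InLocalPolytope L E (trUp1 L xstar mu1) (trUp2 L xstar mu2) := by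
    rw [hU1, hU2]; exact inLocal_push L E (fun s i' => i' ⊔ xstar s) hmu
  have hID : innerE L E f0 f1 f2 (trDown1 L xstar mu1) (trDown2 L xstar mu2)
      = f0 + ∑ s, ∑ i', f1 s (i' ⊓ xstar s) * mu1 s i'
        + ∑ e ∈ E, ∑ i', ∑ j', f2 e (i' ⊓ xstar e.1) (j' ⊓ xstar e.2) * mu2 e i' j' := by
    rw [hD1, hD2]
    exact innerE_push L E f0 f1 f2 mu1 mu2 (fun s i' => i' ⊓ xstar s)
  have hIU : innerE L E f0 f1 f2 (trUp1 L xstar mu1) (trUp2 L xstar mu2)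
      = f0 + ∑ s, ∑ i', f1 s (i' ⊔ xstar s) * mu1 s i'
        + ∑ e ∈ E, ∑ i', ∑ j', f2 e (i' ⊔ xstar e.1) (j' ⊔ xstar e.2) * mu2 e i' j' := by
    rw [hU1, hU2]
    exact innerE_push L E f0 f1 f2 mu1 mu2 (fun s i' => i' ⊔ xstar s)
  -- singleton terms: exact identity
  have hA : ∑ s, ∑ i', f1 s (i' ⊓ xstar s) * mu1 s i'
      + ∑ s, ∑ i', f1 s (i' ⊔ xstar s) * mu1 s i'
      = ∑ s, ∑ i, f1 s i * mu1 s i + ∑ s, f1 s (xstar s) := by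
    rw [← Finset.sum_add_distrib, ← Finset.sum_add_distrib]
    refine Finset.sum_congr rfl fun s _ => ?_
    rw [← Finset.sum_add_distrib]
    have hpt : ∀ i' : Fin (L + 1),
        f1 s (i' ⊓ xstar s) * mu1 s i' + f1 s (i' ⊔ xstar s) * mu1 s i'
          = f1 s i' * mu1 s i' + f1 s (xstar s) * mu1 s i' := by
      intro i'
      rcases le_total i' (xstar s) with h | h
      · rw [inf_eq_left.2 h, sup_eq_right.2 h]
      · rw [inf_eq_right.2 h, sup_eq_left.2 h]; ring
    rw [Finset.sum_congr rfl fun i' _ => hpt i', Finset.sum_add_distrib,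
      ← Finset.mul_sum, hmu.2.2.1 s, mul_one]
  -- pairwise terms: submodular inequality
  have hB : (∑ e ∈ E, ∑ i', ∑ j', f2 e (i' ⊓ xstar e.1) (j' ⊓ xstar e.2) * mu2 e i' j')
      + ∑ e ∈ E, ∑ i', ∑ j', f2 e (i' ⊔ xstar e.1) (j' ⊔ xstar e.2) * mu2 e i' j'
      ≤ (∑ e ∈ E, ∑ i, ∑ j, f2 e i j * mu2 e i j)
        + ∑ e ∈ E, f2 e (xstar e.1) (xstar e.2) := by
    rw [← Finset.sum_add_distrib, ← Finset.sum_add_distrib]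
    refine Finset.sum_le_sum fun e he => ?_
    have hnn := hmu.2.1 e he
    have hone := hmu.2.2.2.1 e he
    calc (∑ i', ∑ j', f2 e (i' ⊓ xstar e.1) (j' ⊓ xstar e.2) * mu2 e i' j')
          + ∑ i', ∑ j', f2 e (i' ⊔ xstar e.1) (j' ⊔ xstar e.2) * mu2 e i' j'
        = ∑ i', ∑ j', (f2 e (i' ⊓ xstar e.1) (j' ⊓ xstar e.2)
            + f2 e (i' ⊔ xstar e.1) (j' ⊔ xstar e.2)) * mu2 e i' j' := by
          rw [← Finset.sum_add_distrib]
          refine Finset.sum_congr rfl fun i' _ => ?_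
          rw [← Finset.sum_add_distrib]
          exact Finset.sum_congr rfl fun j' _ => by ring
      _ ≤ ∑ i', ∑ j', (f2 e i' j' + f2 e (xstar e.1) (xstar e.2)) * mu2 e i' j' := by
          refine Finset.sum_le_sum fun i' _ => Finset.sum_le_sum fun j' _ => ?_
          refine mul_le_mul_of_nonneg_right ?_ (hnn i' j')
          have hs := hsub e he (i', j') (xstar e.1, xstar e.2)
          simp only [Prod.sup_def, Prod.inf_def] at hs
          linarith
      _ = (∑ i, ∑ j, f2 e i j * mu2 e i j) + f2 e (xstar e.1) (xstar e.2) := by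
          simp_rw [add_mul, Finset.sum_add_distrib, ← Finset.mul_sum]
          rw [hone, mul_one]
  have htD := htight _ _ hmemD
  have htU := htight _ _ hmemU
  have key : innerE L E f0 f1 f2 (trDown1 L xstar mu1) (trDown2 L xstar mu2)
      + innerE L E f0 f1 f2 (trUp1 L xstar mu1) (trUp2 L xstar mu2)
      ≤ innerE L E f0 f1 f2 mu1 mu2 + energyE L E f0 f1 f2 xstar := by
    rw [hID, hIU]
    unfold innerE energyE
    linarith
  constructor <;> linarith
end

section
/- Let g be a two-label pairwise energy and g' its truncation with parameters (α_{st}, β_{st}) on non-submodular edges. Then g' is submodular, and for every binary labeling z: g(z) − g(0) ≤ g'(z) − g'(0). -/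
open Finset

/-- The discrepancy `Δ_{st}` of a binary pairwise term. -/
def binDelta {V : Type*} (g2 : V × V → Bool → Bool → ℝ) (e : V × V) : ℝ :=
  g2 e true true + g2 e false false - g2 e false true - g2 e true false

/-- The `(α, β)`-truncation of the pairwise terms of a binary energy: edges with
`Δ_{st} ≤ 0` (submodular) are kept, non-submodular edges are modified. -/
noncomputable def binTrunc {V : Type*} (g2 : V × V → Bool → Bool → ℝ)
    (α β : V × V → ℝ) : V × V → Bool → Bool → ℝ :=
  fun e b1 b2 =>
    if binDelta g2 e ≤ 0 then g2 e b1 b2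
    else
      match b1, b2 with
      | false, false => g2 e false false - β e * binDelta g2 e
      | false, true  => g2 e false true + α e * binDelta g2 e
      | true,  false => g2 e true false + (1 - α e - β e) * binDelta g2 e
      | true,  true  => g2 e true true

/-- The binary pairwise energy of a labeling `z : V → Bool`. -/
def binEnergy {V : Type*} [Fintype V] (E : Finset (V × V)) (g0 : ℝ)
    (g1 : V → Bool → ℝ) (g2 : V × V → Bool → Bool → ℝ) (z : V → Bool) : ℝ :=
  g0 + ∑ s, g1 s (z s) + ∑ e ∈ E, g2 e (z e.1) (z e.2)

/-- The truncation `g'` of a binary energy `g` is submodular, and for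
every binary labeling `z` it holds `g(z) − g(0) ≤ g'(z) − g'(0)` where `0` is the
all-zero labeling. -/
theorem truncation_submodular_and_dominates {V : Type*} [Fintype V]
    (E : Finset (V × V)) (g0 : ℝ) (g1 : V → Bool → ℝ)
    (g2 : V × V → Bool → Bool → ℝ) (α β : V × V → ℝ)
    (hα : ∀ e, 0 ≤ α e) (hβ : ∀ e, 0 ≤ β e) (hαβ : ∀ e, α e + β e ≤ 1) :
    (∀ e, binTrunc g2 α β e true true + binTrunc g2 α β e false false ≤
      binTrunc g2 α β e false true + binTrunc g2 α β e true false) ∧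
    (∀ z : V → Bool,
      binEnergy E g0 g1 g2 z - binEnergy E g0 g1 g2 (fun _ => false) ≤
      binEnergy E g0 g1 (binTrunc g2 α β) z -
        binEnergy E g0 g1 (binTrunc g2 α β) (fun _ => false)) := by

  have key : ∀ (e : V × V) (b1 b2 : Bool),
      g2 e b1 b2 - g2 e false false ≤
      binTrunc g2 α β e b1 b2 - binTrunc g2 α β e false false := by
    intro e b1 b2
    unfold binTrunc
    by_cases h : binDelta g2 e ≤ 0
    · simp [h]
    · simp only [if_neg h]
      push_neg at h
      have h1 := hα e; have h2 := hβ e; have h3 := hαβ e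
      cases b1 <;> cases b2 <;> simp <;> nlinarith
  constructor
  · intro e
    unfold binTrunc
    by_cases h : binDelta g2 e ≤ 0
    · simp only [if_pos h]
      unfold binDelta at h
      linarith
    · simp only [if_neg h]
      push_neg at h
      unfold binDelta at *
      ring_nf
      nlinarith
  · intro z
    unfold binEnergy
    have := Finset.sum_le_sum (s := E)
      (f := fun e => g2 e (z e.1) (z e.2) - g2 e false false)
      (g := fun e => binTrunc g2 α β e (z e.1) (z e.2) - binTrunc g2 α β e false false)
      (fun e _ => key e (z e.1) (z e.2))
    rw [Finset.sum_sub_distrib, Finset.sum_sub_distrib] at this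
    linarith
end

section
/- For the truncation family g^{α,β} of a binary energy g, the truncation with β = 0 dominates: for all z, g(z) − g(0) ≤ g^{α,0}(z) − g^{α,0}(0) ≤ g^{α,β}(z) − g^{α,β}(0) ≤ g^{0,1}(z) − g^{0,1}(0), where g^{0,1} is the truncation with α = 0, β = 1. In particular, any z improving g^{0,1} (i.e., g^{0,1}(z) < g^{0,1}(0)) improves every truncation g^{α,β}. -/
open Finset

lemma energy_mono {V : Type*} [Fintype V] (E : Finset (V × V)) (g0 : ℝ)
    (g1 : V → Bool → ℝ) (h h' : V × V → Bool → Bool → ℝ) (z : V → Bool)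
    (hle : ∀ e ∈ E, h e (z e.1) (z e.2) - h e false false ≤
      h' e (z e.1) (z e.2) - h' e false false) :
    binEnergy E g0 g1 h z - binEnergy E g0 g1 h (fun _ => false) ≤
      binEnergy E g0 g1 h' z - binEnergy E g0 g1 h' (fun _ => false) := by
  simp only [binEnergy]
  have H := Finset.sum_le_sum hle
  rw [Finset.sum_sub_distrib, Finset.sum_sub_distrib] at H
  linarith

lemma trunc_diff_le {V : Type*} (g2 : V × V → Bool → Bool → ℝ)
    (a b a' b' : V × V → ℝ) (e : V × V) (b1 b2 : Bool)
    (h1 : a e + b e ≤ a' e + b' e) (h2 : a' e ≤ a e) (h3 : b e ≤ b' e) :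
    binTrunc g2 a b e b1 b2 - binTrunc g2 a b e false false ≤
      binTrunc g2 a' b' e b1 b2 - binTrunc g2 a' b' e false false := by
  unfold binTrunc
  by_cases hd : binDelta g2 e ≤ 0
  · simp [hd]
  · push_neg at hd
    simp only [if_neg (not_le.mpr hd)]
    cases b1 <;> cases b2 <;> simp <;> nlinarith

lemma orig_diff_le {V : Type*} (g2 : V × V → Bool → Bool → ℝ)
    (a b : V × V → ℝ) (e : V × V) (b1 b2 : Bool)
    (h1 : 0 ≤ a e + b e) (h2 : a e + b e ≤ 1) (h3 : 0 ≤ b e) :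
    g2 e b1 b2 - g2 e false false ≤
      binTrunc g2 a b e b1 b2 - binTrunc g2 a b e false false := by
  unfold binTrunc
  by_cases hd : binDelta g2 e ≤ 0
  · simp [hd]
  · push_neg at hd
    simp only [if_neg (not_le.mpr hd)]
    cases b1 <;> cases b2 <;> simp <;> nlinarith

/-- Within the truncation family `g^{α,β}`, for every `z`:
`g(z) − g(0) ≤ g^{α,0}(z) − g^{α,0}(0) ≤ g^{α,β}(z) − g^{α,β}(0)
  ≤ g^{0,1}(z) − g^{0,1}(0)`.
In particular any `z` improving `g^{0,1}` improves every truncation `g^{α,β}`. -/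
theorem truncation_family_chain {V : Type*} [Fintype V]
    (E : Finset (V × V)) (g0 : ℝ) (g1 : V → Bool → ℝ)
    (g2 : V × V → Bool → Bool → ℝ) (α β : V × V → ℝ)
    (hα : ∀ e, 0 ≤ α e) (hβ : ∀ e, 0 ≤ β e) (hαβ : ∀ e, α e + β e ≤ 1) :
    (∀ z : V → Bool,
      (binEnergy E g0 g1 g2 z - binEnergy E g0 g1 g2 (fun _ => false) ≤
        binEnergy E g0 g1 (binTrunc g2 α (fun _ => 0)) z -
          binEnergy E g0 g1 (binTrunc g2 α (fun _ => 0)) (fun _ => false)) ∧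
      (binEnergy E g0 g1 (binTrunc g2 α (fun _ => 0)) z -
          binEnergy E g0 g1 (binTrunc g2 α (fun _ => 0)) (fun _ => false) ≤
        binEnergy E g0 g1 (binTrunc g2 α β) z -
          binEnergy E g0 g1 (binTrunc g2 α β) (fun _ => false)) ∧
      (binEnergy E g0 g1 (binTrunc g2 α β) z -
          binEnergy E g0 g1 (binTrunc g2 α β) (fun _ => false) ≤
        binEnergy E g0 g1 (binTrunc g2 (fun _ => 0) (fun _ => 1)) z -
          binEnergy E g0 g1 (binTrunc g2 (fun _ => 0) (fun _ => 1)) (fun _ => false))) ∧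
    (∀ z : V → Bool,
      binEnergy E g0 g1 (binTrunc g2 (fun _ => 0) (fun _ => 1)) z <
        binEnergy E g0 g1 (binTrunc g2 (fun _ => 0) (fun _ => 1)) (fun _ => false) →
      binEnergy E g0 g1 (binTrunc g2 α β) z <
        binEnergy E g0 g1 (binTrunc g2 α β) (fun _ => false)) := by
  constructor
  · intro z
    refine ⟨?_, ?_, ?_⟩
    · exact energy_mono E g0 g1 _ _ z fun e _ =>
        orig_diff_le g2 α (fun _ => 0) e _ _ (by simpa using hα e)
          (by have := hαβ e; have := hβ e; simp; linarith) (by simp)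
    · exact energy_mono E g0 g1 _ _ z fun e _ =>
        trunc_diff_le g2 α (fun _ => 0) α β e _ _ (by have := hβ e; simp; linarith)
          le_rfl (hβ e)
    · exact energy_mono E g0 g1 _ _ z fun e _ =>
        trunc_diff_le g2 α β (fun _ => 0) (fun _ => 1) e _ _
          (by have := hαβ e; simp; linarith) (hα e)
          (by have := hαβ e; have := hα e; simp; linarith)
  · intro z hz
    have h := energy_mono E g0 g1 (binTrunc g2 α β)
      (binTrunc g2 (fun _ => 0) (fun _ => 1)) z fun e _ =>
        trunc_diff_le g2 α β (fun _ => 0) (fun _ => 1) e _ _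
          (by have := hαβ e; simp; linarith) (hα e)
          (by have := hαβ e; have := hα e; simp; linarith)
    linarith
end
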